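/- arXiv:2009.09375 — 2 statements merged into one kernel-verified Lean document; each statement's English description precedes it below -/
import Mathlib

section
/- Let χ be a complex character of G. Then: (i) if y, z ∈ P̃₁ satisfy H ∩ y = H ∩ z, then e_χ y is a nonzero scalar multiple of e_χ z; (ii) if y, z ∈ P̃₁ satisfy y ⊆ z and e_χ z ≠ 0, then e_χ y ≠ 0; (iii) for all 0 ≤ i ≤ a and 0 ≤ j ≤ b, the nonzero vectors among the vectors e_χ(y ∨ u), where y ranges over P̃_{i,j,0}, form a basis of M(χ)_{i,j}. -/
open Module

variable (F : Type) [Field F] [Fintype F] (n : ℕ)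

/-- The subgroup `G` of `SL(Ṽ)` consisting of the elements fixing every
vector of the hyperplane `H`. -/
noncomputable def Gsub (H : Submodule F (Fin n → F)) :
    Subgroup ((Fin n → F) ≃ₗ[F] (Fin n → F)) where
  carrier := {g | LinearEquiv.det g = 1 ∧ ∀ v ∈ H, g v = v}
  one_mem' := ⟨map_one _, fun v _ => rfl⟩
  mul_mem' := by
    rintro g h ⟨hg1, hg2⟩ ⟨hh1, hh2⟩
    refine ⟨by rw [map_mul, hg1, hh1, one_mul], fun v hv => ?_⟩
    show g (h v) = v
    rw [hh2 v hv, hg2 v hv]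
  inv_mem' := by
    rintro g ⟨hg1, hg2⟩
    refine ⟨by rw [map_inv, hg1, inv_one], fun v hv => ?_⟩
    show g.symm v = v
    conv_lhs => rw [← hg2 v hv]
    exact g.symm_apply_apply v

/-- The image of a subspace under a linear automorphism. -/
noncomputable def smap (g : (Fin n → F) ≃ₗ[F] (Fin n → F))
    (y : Submodule F (Fin n → F)) : Submodule F (Fin n → F) :=
  Submodule.map (g : (Fin n → F) →ₗ[F] (Fin n → F)) y

/-- The `χ`-homogeneous component of the span of the basis vectors indexed by `S`. -/
noncomputable def Mcomp (H : Submodule F (Fin n → F)) (χ : Gsub F n H →* ℂ)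
    (S : Set (Submodule F (Fin n → F))) : Submodule ℂ (Submodule F (Fin n → F) → ℂ) where
  carrier := {v | (∀ y, y ∉ S → v y = 0) ∧
      ∀ g : Gsub F n H, ∀ y : Submodule F (Fin n → F),
        v (smap F n ((g⁻¹ : Gsub F n H) : (Fin n → F) ≃ₗ[F] (Fin n → F)) y) = χ g * v y}
  zero_mem' := ⟨fun _ _ => rfl, fun g y => by simp⟩
  add_mem' := by
    rintro v w ⟨hv1, hv2⟩ ⟨hw1, hw2⟩
    refine ⟨fun y hy => by simp [hv1 y hy, hw1 y hy], fun g y => ?_⟩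
    simp only [Pi.add_apply, hv2 g y, hw2 g y]
    ring
  smul_mem' := by
    rintro c v ⟨hv1, hv2⟩
    refine ⟨fun y hy => by simp [hv1 y hy], fun g y => ?_⟩
    simp only [Pi.smul_apply, hv2 g y, smul_eq_mul]
    ring

open Classical in
/-- The characteristic vector (as a function) of a single subspace `y`. -/
noncomputable def delta (y z : Submodule F (Fin n → F)) : ℂ :=
  if z = y then 1 else 0

open Classical in
/-- The idempotent `e_χ = q^{-(a+b)} Σ_{g ∈ G} χ(g⁻¹) g` applied to a vector of `ℂP̃`. -/
noncomputable def echi (H : Submodule F (Fin n → F)) [Fintype (Gsub F n H)]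
    (χ : Gsub F n H →* ℂ) (v : Submodule F (Fin n → F) → ℂ) :
    Submodule F (Fin n → F) → ℂ := fun y =>
  ((Fintype.card F : ℂ) ^ (n - 1))⁻¹ *
    ∑ g : Gsub F n H, χ g⁻¹ *
      v (smap F n ((g⁻¹ : Gsub F n H) : (Fin n → F) ≃ₗ[F] (Fin n → F)) y)

/-!
`G` contains the transvections `v ↦ v + f(v) d` with `ker f = H` and `f d = 0`. Such a
transvection fixes `H ∩ y` pointwise and sends a vector `v ∈ y \ H` to any vector of `z \ H` with
the same value of `f`; since `y = (H ∩ y) + ⟨v⟩`, `G` is transitive on the subspaces not in `H`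
with a prescribed trace on `H`. This gives (i), because `e_χ (g y) = χ(g) e_χ y`.

`e_χ y ≠ 0` exactly when `χ` is trivial on the stabiliser of `y`, and for `y ⊆ z` with `y ⊄ H`
the stabiliser of `y` fixes `z = (H ∩ z) + y`; this gives (ii).

For (iii), `y ↦ y ∨ u` is a system of orbit representatives of `G` on `P̃_{i,j,1}` with inverse
`w ↦ H ∩ w`. A `χ`-isotypic function is determined by its values on representatives, and it
vanishes on the orbits whose stabiliser is not contained in `ker χ`; so the nonzero orbit sums
`e_χ (y ∨ u)` form a basis of `M(χ)_{i,j}`.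
-/

open Module

section TwistedOrbitSum

variable {G X k : Type*} [Group G] [Fintype G] [MulAction G X] [Field k]

open Classical in
/-- The vector `∑_g χ(g⁻¹) (g • y)` of `k X`; for the group `G` of the paper, `e_χ y` is
`|G|⁻¹` times it. -/
noncomputable def twistedOrbitSum (χ : G →* k) (y : X) : X → k :=
  fun w => ∑ g : G, if g • y = w then χ g⁻¹ else 0

/-- The paper's `M(χ)` for the functions supported on `S`, where `g` acts on `k X` by
`(g • v) w = v (g⁻¹ • w)`. -/
def characterSubspace (χ : G →* k) (S : Set X) : Submodule k (X → k) where
  carrier := {v | (∀ w, w ∉ S → v w = 0) ∧ ∀ (g : G) (w : X), v (g⁻¹ • w) = χ g * v w}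
  zero_mem' := ⟨fun _ _ => rfl, fun _ _ => (mul_zero _).symm⟩
  add_mem' := fun ⟨hv, hv'⟩ ⟨hw, hw'⟩ =>
    ⟨fun y hy => by simp [hv y hy, hw y hy], fun g y => by simp [hv' g y, hw' g y, mul_add]⟩
  smul_mem' := fun c v ⟨hv, hv'⟩ =>
    ⟨fun y hy => by simp [hv y hy], fun g y => by simp [hv' g y, mul_left_comm]⟩

variable (χ : G →* k)

lemma twistedOrbitSum_smul (g : G) (y : X) :
    twistedOrbitSum χ (g • y) = χ g • twistedOrbitSum χ y := by
  classical
  funext w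
  simp only [twistedOrbitSum, Pi.smul_apply, smul_eq_mul, Finset.mul_sum, mul_ite, mul_zero]
  refine Fintype.sum_equiv (Equiv.mulRight g) _ _ fun h => ?_
  simp [mul_smul, ← map_mul]

lemma twistedOrbitSum_apply_inv_smul (y : X) (g : G) (w : X) :
    twistedOrbitSum χ y (g⁻¹ • w) = χ g * twistedOrbitSum χ y w := by
  classical
  simp only [twistedOrbitSum, Finset.mul_sum, mul_ite, mul_zero]
  refine Fintype.sum_equiv (Equiv.mulLeft g) _ _ fun h => ?_
  rw [Equiv.coe_mulLeft, mul_smul, eq_inv_smul_iff, mul_inv_rev, map_mul, mul_left_comm,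
    ← map_mul, mul_inv_cancel, map_one, mul_one]

lemma twistedOrbitSum_eq_zero {y : X} {s : G} (hs : s • y = y) (hχ : χ s ≠ 1) :
    twistedOrbitSum χ y = 0 := by
  have h := twistedOrbitSum_smul χ s y
  rw [hs] at h
  have : (1 - χ s) • twistedOrbitSum χ y = 0 := by rw [sub_smul, one_smul, ← h, sub_self]
  exact (smul_eq_zero.1 this).resolve_left (sub_ne_zero.2 hχ.symm)

lemma twistedOrbitSum_apply_self_ne_zero [CharZero k] {y : X}
    (hχ : ∀ s : G, s • y = y → χ s = 1) : twistedOrbitSum χ y y ≠ 0 := by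
  classical
  have : twistedOrbitSum χ y y = ((Finset.univ.filter fun g : G => g • y = y).card : k) := by
    rw [twistedOrbitSum, Finset.card_filter, Nat.cast_sum]
    refine Finset.sum_congr rfl fun g _ => ?_
    split_ifs with hg
    · rw [map_inv, hχ g hg, inv_one, Nat.cast_one]
    · rw [Nat.cast_zero]
  rw [this, Nat.cast_ne_zero]
  exact Finset.card_ne_zero.2 ⟨1, by simp⟩

lemma twistedOrbitSum_ne_zero_iff [CharZero k] {y : X} :
    twistedOrbitSum χ y ≠ 0 ↔ ∀ s : G, s • y = y → χ s = 1 :=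
  ⟨fun h _ hs => by_contra fun hχ => h (twistedOrbitSum_eq_zero χ hs hχ),
    fun h h0 => twistedOrbitSum_apply_self_ne_zero χ h (congrFun h0 y)⟩

lemma exists_smul_eq_of_twistedOrbitSum_ne_zero {y w : X} (h : twistedOrbitSum χ y w ≠ 0) :
    ∃ g : G, g • y = w := by
  classical
  obtain ⟨g, -, hg⟩ := Finset.exists_ne_zero_of_sum_ne_zero h
  exact ⟨g, by_contra fun hgy => hg (if_neg hgy)⟩

variable {ι : Type*} {r : ι → X} {S : Set X}

lemma twistedOrbitSum_apply_eq_zero_of_ne (hr : ∀ i j (g : G), g • r i = r j → i = j) {i j : ι}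
    (hij : i ≠ j) : twistedOrbitSum χ (r i) (r j) = 0 := by
  by_contra h
  obtain ⟨g, hg⟩ := exists_smul_eq_of_twistedOrbitSum_ne_zero χ h
  exact hij (hr i j g hg)

lemma linearIndependent_twistedOrbitSum [CharZero k] (hr : ∀ i j (g : G), g • r i = r j → i = j)
    (hne : ∀ i, twistedOrbitSum χ (r i) ≠ 0) :
    LinearIndependent k fun i => twistedOrbitSum χ (r i) := by
  classical
  rw [linearIndependent_iff']
  intro s c hsum i hi
  have hval := congrFun hsum (r i)
  rw [Finset.sum_apply, Finset.sum_eq_single i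
    (fun j _ hji => by rw [Pi.smul_apply, twistedOrbitSum_apply_eq_zero_of_ne χ hr hji, smul_zero])
    (fun h => absurd hi h), Pi.smul_apply, Pi.zero_apply, smul_eq_mul] at hval
  exact (mul_eq_zero.1 hval).resolve_right
    (twistedOrbitSum_apply_self_ne_zero χ ((twistedOrbitSum_ne_zero_iff χ).1 (hne i)))

lemma twistedOrbitSum_mem_characterSubspace (hS : ∀ (g : G), ∀ w ∈ S, g • w ∈ S) {y : X}
    (hy : y ∈ S) : twistedOrbitSum χ y ∈ characterSubspace χ S := by
  refine ⟨fun w hw => by_contra fun h => hw ?_, twistedOrbitSum_apply_inv_smul χ y⟩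
  obtain ⟨g, rfl⟩ := exists_smul_eq_of_twistedOrbitSum_ne_zero χ h
  exact hS g y hy

lemma span_twistedOrbitSum_le (hS : ∀ (g : G), ∀ w ∈ S, g • w ∈ S) (hrS : ∀ i, r i ∈ S) :
    Submodule.span k (Set.range fun i => twistedOrbitSum χ (r i)) ≤ characterSubspace χ S :=
  Submodule.span_le.2 (Set.range_subset_iff.2 fun i =>
    twistedOrbitSum_mem_characterSubspace χ hS (hrS i))

lemma twistedOrbitSum_ne_zero_of_apply_ne_zero [CharZero k] {v : X → k}
    (hv : v ∈ characterSubspace χ S) {w : X} (hw : v w ≠ 0) : twistedOrbitSum χ w ≠ 0 := by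
  refine (twistedOrbitSum_ne_zero_iff χ).2 fun s hs => ?_
  have h := hv.2 s w
  rw [inv_smul_eq_iff.2 hs.symm] at h
  exact (mul_eq_right₀ hw).1 h.symm

lemma eq_zero_of_apply_eq_zero [CharZero k] {v : X → k} (hv : v ∈ characterSubspace χ S)
    (hcover : ∀ w ∈ S, twistedOrbitSum χ w ≠ 0 → ∃ i, ∃ g : G, g • r i = w)
    (h0 : ∀ i, v (r i) = 0) : v = 0 := by
  funext w
  by_contra hw
  obtain ⟨i, g, rfl⟩ := hcover w (by_contra fun hS => hw (hv.1 w hS))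
    (twistedOrbitSum_ne_zero_of_apply_ne_zero χ hv hw)
  have h := hv.2 g⁻¹ (r i)
  rw [inv_inv, h0, mul_zero] at h
  exact hw h

lemma span_twistedOrbitSum [CharZero k] [Finite ι] (hS : ∀ (g : G), ∀ w ∈ S, g • w ∈ S)
    (hrS : ∀ i, r i ∈ S) (hr : ∀ i j (g : G), g • r i = r j → i = j)
    (hne : ∀ i, twistedOrbitSum χ (r i) ≠ 0)
    (hcover : ∀ w ∈ S, twistedOrbitSum χ w ≠ 0 → ∃ i, ∃ g : G, g • r i = w) :
    Submodule.span k (Set.range fun i => twistedOrbitSum χ (r i)) = characterSubspace χ S := by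
  classical
  refine le_antisymm (span_twistedOrbitSum_le χ hS hrS) fun v hv => ?_
  cases nonempty_fintype ι
  set c : ι → k := fun i => v (r i) / twistedOrbitSum χ (r i) (r i)
  have hmem : ∑ i, c i • twistedOrbitSum χ (r i) ∈
      Submodule.span k (Set.range fun i => twistedOrbitSum χ (r i)) :=
    Submodule.sum_mem _ fun i _ => Submodule.smul_mem _ _ (Submodule.subset_span ⟨i, rfl⟩)
  suffices v - ∑ i, c i • twistedOrbitSum χ (r i) = 0 by rwa [sub_eq_zero.1 this]
  refine eq_zero_of_apply_eq_zero χ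
    (Submodule.sub_mem _ hv (span_twistedOrbitSum_le χ hS hrS hmem)) hcover fun j => ?_
  rw [Pi.sub_apply, Finset.sum_apply, Finset.sum_eq_single j
    (fun i _ hij => by rw [Pi.smul_apply, twistedOrbitSum_apply_eq_zero_of_ne χ hr hij, smul_zero])
    (fun h => absurd (Finset.mem_univ j) h), Pi.smul_apply, smul_eq_mul, div_mul_cancel₀, sub_self]
  exact twistedOrbitSum_apply_self_ne_zero χ ((twistedOrbitSum_ne_zero_iff χ).1 (hne j))

end TwistedOrbitSum

lemma IsCoatom.inf_sup_eq_of_le {α : Type*} [Lattice α] [BoundedOrder α] [IsModularLattice α]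
    {a y z : α} (ha : IsCoatom a) (hyz : y ≤ z) (hy : ¬ y ≤ a) : a ⊓ z ⊔ y = z :=
  calc a ⊓ z ⊔ y = (y ⊔ a) ⊓ z := by rw [sup_comm, sup_inf_assoc_of_le a hyz]
    _ = z := by rw [sup_comm, ha.2 _ (left_lt_sup.2 hy), top_inf_eq]

lemma inf_sup_eq_of_le_of_inf_eq_bot {α : Type*} [Lattice α] [OrderBot α] [IsModularLattice α]
    {a y u : α} (hy : y ≤ a) (hu : a ⊓ u = ⊥) : a ⊓ (y ⊔ u) = y := by
  rw [inf_comm, sup_inf_assoc_of_le u hy, inf_comm, hu, sup_bot_eq]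

lemma inf_inf_eq_of_le {α : Type*} [SemilatticeInf α] {x H : α} (hxH : x ≤ H) (w : α) :
    x ⊓ (H ⊓ w) = x ⊓ w := by
  rw [← inf_assoc, inf_eq_left.2 hxH]

namespace Submodule

variable {K V : Type*} [Field K] [AddCommGroup V] [Module K V] {H : Submodule K V}

lemma isCoatom_of_finrank_add_one [FiniteDimensional K V]
    (hH : finrank K H + 1 = finrank K V) : IsCoatom H := by
  refine ⟨fun h => by rw [h, finrank_top] at hH; omega, fun W hW => eq_top_of_finrank_eq ?_⟩
  have := finrank_lt_finrank_of_lt hW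
  have := finrank_le W
  omega

lemma exists_dual_ker_eq (hH : IsCoatom H) {v : V} (hv : v ∉ H) :
    ∃ f : Dual K V, LinearMap.ker f = H ∧ f v = 1 := by
  obtain ⟨f, hfv, hfH⟩ := exists_dual_map_eq_bot_of_notMem hv inferInstance
  have hker : LinearMap.ker f = H := by
    refine ((hH.le_iff.1 (LinearMap.le_ker_iff_map.2 hfH)).resolve_left fun h => hfv ?_)
    rw [← LinearMap.mem_ker, h]
    trivial
  exact ⟨(f v)⁻¹ • f, by rw [LinearMap.ker_smul _ _ (inv_ne_zero hfv), hker],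
    by rw [LinearMap.smul_apply, smul_eq_mul, inv_mul_cancel₀ hfv]⟩

variable {g : V ≃ₗ[K] V}

lemma map_eq_self_of_le (hg : ∀ v ∈ H, g v = v) {p : Submodule K V} (hp : p ≤ H) :
    p.map (g : V →ₗ[K] V) = p := by
  refine le_antisymm ?_ fun v hv => ⟨v, hv, hg v (hp hv)⟩
  rintro _ ⟨v, hv, rfl⟩
  rw [LinearEquiv.coe_coe, hg v (hp hv)]
  exact hv

lemma inf_map_eq (hg : ∀ v ∈ H, g v = v) (p : Submodule K V) :
    H ⊓ p.map (g : V →ₗ[K] V) = H ⊓ p := by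
  conv_lhs => rw [← map_eq_self_of_le hg le_rfl]
  rw [← map_inf _ g.injective, map_eq_self_of_le hg inf_le_left]

lemma map_eq_self_of_le_of_map_eq_self (hH : IsCoatom H) (hg : ∀ v ∈ H, g v = v)
    {y z : Submodule K V} (hyz : y ≤ z) (hy : ¬ y ≤ H) (hgy : y.map (g : V →ₗ[K] V) = y) :
    z.map (g : V →ₗ[K] V) = z := by
  rw [← hH.inf_sup_eq_of_le hyz hy, map_sup, map_eq_self_of_le hg inf_le_left, hgy]

lemma exists_transvection_map_eq (hH : IsCoatom H) {y z : Submodule K V} (hy : ¬ y ≤ H)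
    (hz : ¬ z ≤ H) (hyz : H ⊓ y = H ⊓ z) :
    ∃ g : V ≃ₗ[K] V, g.det = 1 ∧ (∀ v ∈ H, g v = v) ∧ y.map (g : V →ₗ[K] V) = z := by
  obtain ⟨v, hvy, hvH⟩ := SetLike.not_le_iff_exists.1 hy
  obtain ⟨w, hwz, hwH⟩ := SetLike.not_le_iff_exists.1 hz
  obtain ⟨f, hker, hfv⟩ := exists_dual_ker_eq hH hvH
  have hfw : f w ≠ 0 := fun h => hwH (hker ▸ LinearMap.mem_ker.2 h)
  have hd : f ((f w)⁻¹ • w - v) = 0 := by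
    rw [map_sub, map_smul, smul_eq_mul, inv_mul_cancel₀ hfw, hfv, sub_self]
  have hfix : ∀ x ∈ H, LinearEquiv.transvection hd x = x := fun x hx => by
    rw [LinearEquiv.transvection.apply, LinearMap.mem_ker.1 (hker ▸ hx : x ∈ LinearMap.ker f),
      zero_smul, add_zero]
  refine ⟨LinearEquiv.transvection hd, LinearEquiv.transvection.det_eq_one hd, hfix, ?_⟩
  have hspan : ∀ {p : Submodule K V} {x : V}, x ∈ p → x ∉ H → H ⊓ p ⊔ span K {x} = p :=
    fun hx hxH => hH.inf_sup_eq_of_le ((span_singleton_le_iff_mem _ _).2 hx)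
      fun h => hxH ((span_singleton_le_iff_mem _ _).1 h)
  have hv : LinearEquiv.transvection hd v = (f w)⁻¹ • w := by
    rw [LinearEquiv.transvection.apply, hfv, one_smul, add_sub_cancel]
  rw [← hspan hvy hvH, map_sup, map_eq_self_of_le hfix inf_le_left, map_span, Set.image_singleton,
    LinearEquiv.coe_coe, hv, hyz]
  exact hspan (z.smul_mem _ hwz) fun h => hwH (by simpa [hfw] using H.smul_mem (f w) h)

end Submodule

section Stratum

variable {K V : Type*} [Field K] [AddCommGroup V] [Module K V]

/-- The paper's `P̃_{i,j,k}`. -/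
def stratum (x H : Submodule K V) (i j k : ℕ) : Set (Submodule K V) :=
  {y | finrank K ↥(x ⊓ y) = i ∧ finrank K ↥(H ⊓ y) = i + j ∧ finrank K y = i + j + k}

variable {x H u y w : Submodule K V} {i j : ℕ}

lemma not_le_of_mem_stratum_one (hw : w ∈ stratum x H i j 1) : ¬ w ≤ H := fun h => by
  have := hw.2.1
  rw [inf_eq_right.2 h, hw.2.2] at this
  omega

lemma inf_mem_stratum_zero (hxH : x ≤ H) (hw : w ∈ stratum x H i j 1) :
    H ⊓ w ∈ stratum x H i j 0 :=
  ⟨by rw [inf_inf_eq_of_le hxH]; exact hw.1, by rw [← inf_assoc, inf_idem]; exact hw.2.1, hw.2.1⟩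

variable [FiniteDimensional K V]

lemma le_of_mem_stratum_zero (hy : y ∈ stratum x H i j 0) : y ≤ H := by
  have : H ⊓ y = y := Submodule.eq_of_le_of_finrank_le inf_le_right (by rw [hy.2.1, hy.2.2]; rfl)
  exact this ▸ inf_le_left

lemma sup_mem_stratum_one (hxH : x ≤ H) (hHu : H ⊓ u = ⊥) (hu : finrank K u = 1)
    (hy : y ∈ stratum x H i j 0) : y ⊔ u ∈ stratum x H i j 1 := by
  have hyH := le_of_mem_stratum_zero hy
  have hinf : H ⊓ (y ⊔ u) = y := inf_sup_eq_of_le_of_inf_eq_bot hyH hHu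
  have hyu : y ⊓ u = ⊥ := eq_bot_iff.2 (hHu ▸ inf_le_inf_right u hyH)
  have hdim := Submodule.finrank_sup_add_finrank_inf_eq y u
  rw [hyu, finrank_bot, hu, add_zero] at hdim
  exact ⟨by rw [← inf_inf_eq_of_le hxH, hinf]; exact hy.1, by rw [hinf]; exact hy.2.2,
    by rw [hdim, hy.2.2]⟩

end Stratum

section Gsub

open scoped Pointwise

variable {F : Type} [Field F] {n : ℕ} {H : Submodule F (Fin n → F)}

namespace Gsub

lemma inf_smul (g : Gsub F n H) (y : Submodule F (Fin n → F)) : H ⊓ g • y = H ⊓ y :=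
  Submodule.inf_map_eq g.2.2 y

lemma finrank_smul (g : Gsub F n H) (y : Submodule F (Fin n → F)) :
    finrank F ↥(g • y) = finrank F y :=
  LinearEquiv.finrank_map_eq _ y

lemma smul_eq_self_of_le (hH : IsCoatom H) (g : Gsub F n H) {y z : Submodule F (Fin n → F)}
    (hyz : y ≤ z) (hy : ¬ y ≤ H) (hgy : g • y = y) : g • z = z :=
  Submodule.map_eq_self_of_le_of_map_eq_self hH g.2.2 hyz hy hgy

lemma exists_smul_eq (hH : IsCoatom H) {y z : Submodule F (Fin n → F)} (hy : ¬ y ≤ H)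
    (hz : ¬ z ≤ H) (hyz : H ⊓ y = H ⊓ z) : ∃ g : Gsub F n H, g • y = z := by
  obtain ⟨g, hdet, hg, hgy⟩ := Submodule.exists_transvection_map_eq hH hy hz hyz
  exact ⟨⟨g, hdet, hg⟩, hgy⟩

lemma smul_mem_stratum {x w : Submodule F (Fin n → F)} {i j k : ℕ} (hxH : x ≤ H)
    (g : Gsub F n H) (hw : w ∈ stratum x H i j k) : g • w ∈ stratum x H i j k :=
  ⟨by rw [← inf_inf_eq_of_le hxH, inf_smul, inf_inf_eq_of_le hxH]; exact hw.1,
    by rw [inf_smul]; exact hw.2.1, by rw [finrank_smul]; exact hw.2.2⟩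

end Gsub

lemma Mcomp_eq_characterSubspace (χ : Gsub F n H →* ℂ) (S : Set (Submodule F (Fin n → F))) :
    Mcomp F n H χ S = characterSubspace χ S :=
  rfl

variable [Fintype F]

lemma echi_scale_ne_zero : ((Fintype.card F : ℂ) ^ (n - 1))⁻¹ ≠ 0 :=
  inv_ne_zero (pow_ne_zero _ (Nat.cast_ne_zero.2 Fintype.card_ne_zero))

variable [Fintype (Gsub F n H)] (χ : Gsub F n H →* ℂ)

lemma echi_delta (y : Submodule F (Fin n → F)) :
    echi F n H χ (delta F n y) = ((Fintype.card F : ℂ) ^ (n - 1))⁻¹ • twistedOrbitSum χ y := by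
  funext w
  simp only [echi, delta, twistedOrbitSum, Pi.smul_apply, smul_eq_mul, mul_ite, mul_one, mul_zero]
  congr 1
  refine Finset.sum_congr rfl fun g _ => ?_
  change (if g⁻¹ • w = y then χ g⁻¹ else 0) = _
  exact if_congr (inv_smul_eq_iff.trans eq_comm) rfl rfl

lemma echi_delta_smul (g : Gsub F n H) (y : Submodule F (Fin n → F)) :
    echi F n H χ (delta F n (g • y)) = χ g • echi F n H χ (delta F n y) := by
  rw [echi_delta, echi_delta, twistedOrbitSum_smul, smul_comm]

lemma echi_delta_ne_zero_iff {y : Submodule F (Fin n → F)} :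
    echi F n H χ (delta F n y) ≠ 0 ↔ ∀ s : Gsub F n H, s • y = y → χ s = 1 := by
  rw [echi_delta, smul_ne_zero_iff_right echi_scale_ne_zero, twistedOrbitSum_ne_zero_iff]

theorem linearIndependent_and_span_echi_delta_sup {x u : Submodule F (Fin n → F)}
    (hH : IsCoatom H) (hxH : x ≤ H) (hHu : H ⊓ u = ⊥) (hu : finrank F u = 1) (i j : ℕ) :
    LinearIndependent ℂ (fun y : {y // y ∈ stratum x H i j 0 ∧
        echi F n H χ (delta F n (y ⊔ u)) ≠ 0} => echi F n H χ (delta F n (y.1 ⊔ u))) ∧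
      Submodule.span ℂ (Set.range fun y : {y // y ∈ stratum x H i j 0 ∧
        echi F n H χ (delta F n (y ⊔ u)) ≠ 0} => echi F n H χ (delta F n (y.1 ⊔ u))) =
        Mcomp F n H χ (stratum x H i j 1) := by
  have hc := echi_scale_ne_zero (F := F) (n := n)
  have hne : ∀ {y}, echi F n H χ (delta F n y) ≠ 0 → twistedOrbitSum χ y ≠ 0 := fun h => by
    rwa [echi_delta, smul_ne_zero_iff_right hc] at h
  have hinj : ∀ {y y'}, y ∈ stratum x H i j 0 → y' ∈ stratum x H i j 0 →
      ∀ g : Gsub F n H, g • (y ⊔ u) = y' ⊔ u → y = y' := fun hy hy' g h => by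
    rw [← inf_sup_eq_of_le_of_inf_eq_bot (le_of_mem_stratum_zero hy) hHu,
      ← inf_sup_eq_of_le_of_inf_eq_bot (le_of_mem_stratum_zero hy') hHu, ← h, Gsub.inf_smul]
  have huH : ¬ u ≤ H := fun h => by
    rw [inf_eq_right.2 h] at hHu
    rw [hHu, finrank_bot] at hu
    exact zero_ne_one hu
  simp only [echi_delta]
  refine ⟨LinearIndependent.units_smul (w := fun _ => Units.mk0 _ hc) ?_, ?_⟩
  · exact linearIndependent_twistedOrbitSum χ (fun y y' g h => Subtype.ext (hinj y.2.1 y'.2.1 g h))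
      fun y => hne y.2.2
  rw [Set.range_smul, Submodule.span_smul_eq_of_isUnit _ _ hc.isUnit, Mcomp_eq_characterSubspace χ]
  refine span_twistedOrbitSum χ (fun g w hw => Gsub.smul_mem_stratum hxH g hw)
    (fun y => sup_mem_stratum_one hxH hHu hu y.2.1)
    (fun y y' g h => Subtype.ext (hinj y.2.1 y'.2.1 g h)) (fun y => hne y.2.2) fun w hw hw0 => ?_
  obtain ⟨g, hg⟩ := Gsub.exists_smul_eq hH (fun h => huH (le_sup_right.trans h))
    (not_le_of_mem_stratum_one hw) (inf_sup_eq_of_le_of_inf_eq_bot inf_le_left hHu)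
  refine ⟨⟨H ⊓ w, inf_mem_stratum_zero hxH hw, ?_⟩, g, hg⟩
  rw [echi_delta, smul_ne_zero_iff_right hc]
  rintro h0
  rw [← hg, twistedOrbitSum_smul, h0, smul_zero] at hw0
  exact hw0 rfl

end Gsub

theorem echi_basis_general (F : Type) [Field F] [Fintype F] (a b : ℕ)
    (x H : Submodule F (Fin (a + b + 1) → F))
    (hH : finrank F H = a + b) (hxH : x ≤ H)
    [Fintype (Gsub F (a + b + 1) H)]
    (u : Submodule F (Fin (a + b + 1) → F))
    (hu : finrank F ↥(x ⊓ u) = 0 ∧ finrank F ↥(H ⊓ u) = 0 ∧ finrank F u = 1)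
    (χ : Gsub F (a + b + 1) H →* ℂ) :
    (∀ y z : Submodule F (Fin (a + b + 1) → F), ¬y ≤ H → ¬z ≤ H → H ⊓ y = H ⊓ z →
      ∃ c : ℂ, c ≠ 0 ∧
        echi F (a + b + 1) H χ (delta F (a + b + 1) y)
          = c • echi F (a + b + 1) H χ (delta F (a + b + 1) z))
    ∧ (∀ y z : Submodule F (Fin (a + b + 1) → F), ¬y ≤ H → ¬z ≤ H → y ≤ z →
        echi F (a + b + 1) H χ (delta F (a + b + 1) z) ≠ 0 →
        echi F (a + b + 1) H χ (delta F (a + b + 1) y) ≠ 0)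
    ∧ (∀ i j : ℕ, i ≤ a → j ≤ b →
        LinearIndependent ℂ
          (fun y : {y : Submodule F (Fin (a + b + 1) → F) //
              (finrank F ↥(x ⊓ y) = i ∧ finrank F ↥(H ⊓ y) = i + j ∧
                finrank F y = i + j) ∧
              echi F (a + b + 1) H χ (delta F (a + b + 1) (y ⊔ u)) ≠ 0} =>
            echi F (a + b + 1) H χ (delta F (a + b + 1) (y.1 ⊔ u)))
        ∧ Submodule.span ℂ
            (Set.range (fun y : {y : Submodule F (Fin (a + b + 1) → F) //
              (finrank F ↥(x ⊓ y) = i ∧ finrank F ↥(H ⊓ y) = i + j ∧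
                finrank F y = i + j) ∧
              echi F (a + b + 1) H χ (delta F (a + b + 1) (y ⊔ u)) ≠ 0} =>
              echi F (a + b + 1) H χ (delta F (a + b + 1) (y.1 ⊔ u))))
          = Mcomp F (a + b + 1) H χ
              {y | finrank F ↥(x ⊓ y) = i ∧ finrank F ↥(H ⊓ y) = i + j ∧
                finrank F y = i + j + 1}) := by
  have hHc : IsCoatom H :=
    Submodule.isCoatom_of_finrank_add_one (by rw [hH, Module.finrank_fin_fun])
  refine ⟨fun y z hy hz hyz => ?_, fun y z hy _ hyz hne => ?_, fun i j _ _ =>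
    linearIndependent_and_span_echi_delta_sup χ hHc hxH (Submodule.finrank_eq_zero.1 hu.2.1)
      hu.2.2 i j⟩
  · obtain ⟨g, rfl⟩ := Gsub.exists_smul_eq hHc hy hz hyz
    have hχg : χ g ≠ 0 := (IsUnit.map χ (Group.isUnit g)).ne_zero
    exact ⟨(χ g)⁻¹, inv_ne_zero hχg, by rw [echi_delta_smul, inv_smul_smul₀ hχg]⟩
  · rw [echi_delta_ne_zero_iff] at hne ⊢
    exact fun s hs => hne s (Gsub.smul_eq_self_of_le hHc s hyz hy hs)

/-- (i) `e_χ y` is a nonzero multiple of `e_χ z` when `H∩y = H∩z`;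
(ii) if `y ⊆ z` and `e_χ z ≠ 0` then `e_χ y ≠ 0`; (iii) the nonzero vectors
among the `e_χ(y ∨ u)`, `y ∈ P̃_{i,j,0}`, form a basis of `M(χ)_{i,j}`. -/
theorem echi_basis (F : Type) [Field F] [Fintype F] (a b : ℕ)
    (x H : Submodule F (Fin (a + b + 1) → F))
    (hx : finrank F x = a) (hH : finrank F H = a + b) (hxH : x ≤ H)
    [Fintype (Gsub F (a + b + 1) H)]
    (u : Submodule F (Fin (a + b + 1) → F))
    (hu : finrank F ↥(x ⊓ u) = 0 ∧ finrank F ↥(H ⊓ u) = 0 ∧ finrank F u = 1)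
    (χ : Gsub F (a + b + 1) H →* ℂ) :
    (∀ y z : Submodule F (Fin (a + b + 1) → F), ¬y ≤ H → ¬z ≤ H → H ⊓ y = H ⊓ z →
      ∃ c : ℂ, c ≠ 0 ∧
        echi F (a + b + 1) H χ (delta F (a + b + 1) y)
          = c • echi F (a + b + 1) H χ (delta F (a + b + 1) z))
    ∧ (∀ y z : Submodule F (Fin (a + b + 1) → F), ¬y ≤ H → ¬z ≤ H → y ≤ z →
        echi F (a + b + 1) H χ (delta F (a + b + 1) z) ≠ 0 →
        echi F (a + b + 1) H χ (delta F (a + b + 1) y) ≠ 0)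
    ∧ (∀ i j : ℕ, i ≤ a → j ≤ b →
        LinearIndependent ℂ
          (fun y : {y : Submodule F (Fin (a + b + 1) → F) //
              (finrank F ↥(x ⊓ y) = i ∧ finrank F ↥(H ⊓ y) = i + j ∧
                finrank F y = i + j) ∧
              echi F (a + b + 1) H χ (delta F (a + b + 1) (y ⊔ u)) ≠ 0} =>
            echi F (a + b + 1) H χ (delta F (a + b + 1) (y.1 ⊔ u)))
        ∧ Submodule.span ℂ
            (Set.range (fun y : {y : Submodule F (Fin (a + b + 1) → F) //
              (finrank F ↥(x ⊓ y) = i ∧ finrank F ↥(H ⊓ y) = i + j ∧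
                finrank F y = i + j) ∧
              echi F (a + b + 1) H χ (delta F (a + b + 1) (y ⊔ u)) ≠ 0} =>
              echi F (a + b + 1) H χ (delta F (a + b + 1) (y.1 ⊔ u))))
          = Mcomp F (a + b + 1) H χ
              {y | finrank F ↥(x ⊓ y) = i ∧ finrank F ↥(H ⊓ y) = i + j ∧
                finrank F y = i + j + 1}) :=
  echi_basis_general F a b x H hH hxH u hu χ
end

section
/- The matrix R̃₃ maps ℂP̃₀ bijectively onto M(1_G). Moreover, identifying ℂP(x,H) with ℂP̃₀ and letting L₁, L₂, R₁, R₂, E*_{i,j} be the matrices attached to P(x,H) with respect to x, the following identities hold on ℂP(x,H) for all 0 ≤ i ≤ a and 0 ≤ j ≤ b: L̃₁R̃₃ = R̃₃L₁; L̃₂R̃₃ = R̃₃L₂; L̃₃R̃₃E*_{i,j} = q^{a+b−i−j} E*_{i,j}; R̃₁R̃₃ = q R̃₃R₁; R̃₂R̃₃ = q R̃₃R₂; R̃₃R̃₃ = 0; Ẽ*_{i,j,0}R̃₃ = 0; Ẽ*_{i,j,1}R̃₃ = R̃₃E*_{i,j}. -/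
open Module

/-- The q-Pochhammer symbol `(q;q)_n = ∏_{ℓ=0}^{n-1} (1 - q^ℓ)`. -/
noncomputable def qPoch (q : ℂ) (n : ℕ) : ℂ := ∏ l ∈ Finset.range n, (1 - q ^ l)

/-- The q-Pochhammer symbol with an integer index (junk value for negative index). -/
noncomputable def qPochZ (q : ℂ) (n : ℤ) : ℂ := qPoch q n.toNat

/-- The Gaussian binomial coefficient `[m, n]_q`, with the convention that it
vanishes unless `0 ≤ n ≤ m`. -/
noncomputable def qGauss (q : ℂ) (m n : ℤ) : ℂ :=
  if 0 ≤ n ∧ n ≤ m then qPoch q m.toNat / (qPoch q n.toNat * qPoch q (m - n).toNat) else 0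

section Twisted

variable (F : Type) [Field F] [Fintype F] (n : ℕ)

/-- Membership of `y` in `P̃_{i,j,k}` (with respect to `x ⊆ H`). -/
def PtMem (x H : Submodule F (Fin n → F)) (i j k : ℤ) (y : Submodule F (Fin n → F)) : Prop :=
  (finrank F ↥(x ⊓ y) : ℤ) = i ∧ (finrank F ↥(H ⊓ y) : ℤ) = i + j ∧
    (finrank F y : ℤ) = i + j + k

open Classical in
/-- The diagonal matrix `Ẽ*_{i,j,k}`. -/
noncomputable def EstarT (x H : Submodule F (Fin n → F)) (i j k : ℤ) :
    Matrix (Submodule F (Fin n → F)) (Submodule F (Fin n → F)) ℂ :=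
  Matrix.diagonal fun y => if PtMem F n x H i j k y then 1 else 0

open Classical in
/-- The lowering matrix `L̃₁`. -/
noncomputable def LoneT (x H : Submodule F (Fin n → F)) :
    Matrix (Submodule F (Fin n → F)) (Submodule F (Fin n → F)) ℂ :=
  fun y z => if y ≤ z ∧ finrank F y + 1 = finrank F z ∧
    finrank F ↥(x ⊓ y) + 1 = finrank F ↥(x ⊓ z) ∧
    finrank F ↥(H ⊓ y) + 1 = finrank F ↥(H ⊓ z) then 1 else 0

open Classical in
/-- The lowering matrix `L̃₂`. -/
noncomputable def LtwoT (x H : Submodule F (Fin n → F)) :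
    Matrix (Submodule F (Fin n → F)) (Submodule F (Fin n → F)) ℂ :=
  fun y z => if y ≤ z ∧ finrank F y + 1 = finrank F z ∧
    finrank F ↥(x ⊓ y) = finrank F ↥(x ⊓ z) ∧
    finrank F ↥(H ⊓ y) + 1 = finrank F ↥(H ⊓ z) then 1 else 0

open Classical in
/-- The lowering matrix `L̃₃`. -/
noncomputable def LthreeT (x H : Submodule F (Fin n → F)) :
    Matrix (Submodule F (Fin n → F)) (Submodule F (Fin n → F)) ℂ :=
  fun y z => if y ≤ z ∧ finrank F y + 1 = finrank F z ∧
    finrank F ↥(x ⊓ y) = finrank F ↥(x ⊓ z) ∧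
    finrank F ↥(H ⊓ y) = finrank F ↥(H ⊓ z) then 1 else 0

open Classical in
/-- The raising matrix `R̃₁`. -/
noncomputable def RoneT (x H : Submodule F (Fin n → F)) :
    Matrix (Submodule F (Fin n → F)) (Submodule F (Fin n → F)) ℂ :=
  fun y z => if z ≤ y ∧ finrank F z + 1 = finrank F y ∧
    finrank F ↥(x ⊓ z) + 1 = finrank F ↥(x ⊓ y) ∧
    finrank F ↥(H ⊓ z) + 1 = finrank F ↥(H ⊓ y) then 1 else 0

open Classical in
/-- The raising matrix `R̃₂`. -/
noncomputable def RtwoT (x H : Submodule F (Fin n → F)) :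
    Matrix (Submodule F (Fin n → F)) (Submodule F (Fin n → F)) ℂ :=
  fun y z => if z ≤ y ∧ finrank F z + 1 = finrank F y ∧
    finrank F ↥(x ⊓ z) = finrank F ↥(x ⊓ y) ∧
    finrank F ↥(H ⊓ z) + 1 = finrank F ↥(H ⊓ y) then 1 else 0

open Classical in
/-- The raising matrix `R̃₃`. -/
noncomputable def RthreeT (x H : Submodule F (Fin n → F)) :
    Matrix (Submodule F (Fin n → F)) (Submodule F (Fin n → F)) ℂ :=
  fun y z => if z ≤ y ∧ finrank F z + 1 = finrank F y ∧
    finrank F ↥(x ⊓ z) = finrank F ↥(x ⊓ y) ∧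
    finrank F ↥(H ⊓ z) = finrank F ↥(H ⊓ y) then 1 else 0

open Classical in
/-- The diagonal matrix `E*_{i,j}` of `P(x', H')`, viewed inside `Mat_{P̃}(ℂ)`
(supported on the subspaces of `H'`). -/
noncomputable def EstarRel (x' H' : Submodule F (Fin n → F)) (i j : ℤ) :
    Matrix (Submodule F (Fin n → F)) (Submodule F (Fin n → F)) ℂ :=
  Matrix.diagonal fun y => if y ≤ H' ∧ (finrank F ↥(x' ⊓ y) : ℤ) = i ∧
    (finrank F y : ℤ) = i + j then 1 else 0

open Classical in
/-- The lowering matrix `L₁` of `P(x', H')`, viewed inside `Mat_{P̃}(ℂ)`. -/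
noncomputable def LoneRel (x' H' : Submodule F (Fin n → F)) :
    Matrix (Submodule F (Fin n → F)) (Submodule F (Fin n → F)) ℂ :=
  fun y z => if z ≤ H' ∧ y ≤ z ∧ finrank F y + 1 = finrank F z ∧
    finrank F ↥(x' ⊓ y) + 1 = finrank F ↥(x' ⊓ z) then 1 else 0

open Classical in
/-- The lowering matrix `L₂` of `P(x', H')`, viewed inside `Mat_{P̃}(ℂ)`. -/
noncomputable def LtwoRel (x' H' : Submodule F (Fin n → F)) :
    Matrix (Submodule F (Fin n → F)) (Submodule F (Fin n → F)) ℂ :=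
  fun y z => if z ≤ H' ∧ y ≤ z ∧ finrank F y + 1 = finrank F z ∧
    finrank F ↥(x' ⊓ y) = finrank F ↥(x' ⊓ z) then 1 else 0

open Classical in
/-- The raising matrix `R₁` of `P(x', H')`, viewed inside `Mat_{P̃}(ℂ)`. -/
noncomputable def RoneRel (x' H' : Submodule F (Fin n → F)) :
    Matrix (Submodule F (Fin n → F)) (Submodule F (Fin n → F)) ℂ :=
  fun y z => if y ≤ H' ∧ z ≤ y ∧ finrank F z + 1 = finrank F y ∧
    finrank F ↥(x' ⊓ z) + 1 = finrank F ↥(x' ⊓ y) then 1 else 0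

open Classical in
/-- The raising matrix `R₂` of `P(x', H')`, viewed inside `Mat_{P̃}(ℂ)`. -/
noncomputable def RtwoRel (x' H' : Submodule F (Fin n → F)) :
    Matrix (Submodule F (Fin n → F)) (Submodule F (Fin n → F)) ℂ :=
  fun y z => if y ≤ H' ∧ z ≤ y ∧ finrank F z + 1 = finrank F y ∧
    finrank F ↥(x' ⊓ z) = finrank F ↥(x' ⊓ y) then 1 else 0

end Twisted

section GroupPart

variable (F : Type) [Field F] [Fintype F] (n : ℕ)

open Classical in
/-- The linear map `Θ_χ : ℂP̃₀ → ℂP̃₁`, `Θ_χ y = e_χ(y ∨ u)`, as a matrix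
(extended by zero on the basis vectors outside `ℂP̃₀`). -/
noncomputable def Theta (H : Submodule F (Fin n → F)) [Fintype (Gsub F n H)]
    (χ : Gsub F n H →* ℂ) (u : Submodule F (Fin n → F)) :
    Matrix (Submodule F (Fin n → F)) (Submodule F (Fin n → F)) ℂ :=
  fun z y => if y ≤ H then echi F n H χ (delta F n (y ⊔ u)) z else 0

end GroupPart

/-!
On vectors supported on the subspaces of `H`, `R̃₃` acts by `(R̃₃ v) y = v (H ⊓ y)` for `y ⊄ H`
and by `0` on `y ⊆ H`, since `H ⊓ y` is the only subspace covered by `y` with the same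
intersections with `x` and `H`; every identity is a computation with this formula. For `y ⊄ H`
we have `y ⊔ H = ⊤`, so by modularity `u ↦ H ⊓ u` and `w ↦ y ⊔ w` are inverse bijections between
the subspaces covering `y` and the subspaces of `H` covering `H ⊓ y`: this gives the lowering
identities. The factors `q` come from counting: a subspace `w ⊆ H` of `Y` is covered by
`q ^ (dim (H ⊓ Y) - dim w)` subspaces of `Y` not contained in `H` (take `Y = y` for the raising
identities and `Y = Ṽ` for `L̃₃R̃₃`). Finally, transvections with axis `H` lie in `G` and act
transitively on the `y ⊄ H` with a prescribed `H ⊓ y`, so `M(1_G)` consists of the functions on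
`P̃₁` that depend only on `H ⊓ y`, and these are exactly the images under `R̃₃`.
-/

open Module Submodule Finset

theorem inf_inf_of_le {α : Type*} [Lattice α] {a b : α} (h : a ≤ b) (c : α) :
    a ⊓ (b ⊓ c) = a ⊓ c := by
  rw [← inf_assoc, inf_of_le_left h]

section Hyperplane

variable {K V : Type*} [Field K] [AddCommGroup V] [Module K V] {H w y u : Submodule K V}

theorem inf_sup_eq_of_le_of_inf_le (hw : w ≤ H) (h : H ⊓ y ≤ w) : H ⊓ (y ⊔ w) = w := by
  rw [← inf_sup_assoc_of_le y hw, sup_eq_right.mpr h]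

theorem inf_sup_span_singleton_eq {v : V} (hw : w ≤ H) (hv : v ∉ H) :
    H ⊓ (w ⊔ K ∙ v) = w := by
  rw [sup_comm, ← inf_sup_assoc_of_le _ hw, (disjoint_span_singleton_of_notMem hv).eq_bot,
    bot_sup_eq]

theorem exists_notMem_of_finrank_add_one (hH : finrank K H + 1 = finrank K V) :
    ∃ v, v ∉ H := by
  by_contra! h
  rw [(eq_top_iff.2 fun v _ => h v : H = ⊤), finrank_top] at hH
  omega

variable [FiniteDimensional K V]

theorem inf_eq_of_finrank_eq_add_one (hwH : w ≤ H) (hwu : w ≤ u) (hu : ¬ u ≤ H)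
    (hdim : finrank K u = finrank K w + 1) : H ⊓ u = w := by
  have : finrank K ↥(H ⊓ u) < finrank K u :=
    finrank_lt_finrank_of_lt (inf_le_right.lt_of_ne fun h => hu (h ▸ inf_le_left))
  exact (eq_of_le_of_finrank_le (le_inf hwH hwu) (by omega)).symm

theorem sup_eq_top_of_not_le (hH : finrank K H + 1 = finrank K V) (hy : ¬ y ≤ H) :
    H ⊔ y = ⊤ := by
  refine eq_top_of_finrank_eq (le_antisymm (finrank_le _) ?_)
  rw [← hH]
  exact finrank_lt_finrank_of_lt (left_lt_sup.mpr hy)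

theorem finrank_inf_add_one_of_not_le (hH : finrank K H + 1 = finrank K V) (hy : ¬ y ≤ H) :
    finrank K ↥(H ⊓ y) + 1 = finrank K y := by
  have := finrank_sup_add_finrank_inf_eq H y
  rw [sup_eq_top_of_not_le hH hy, finrank_top] at this
  omega

theorem sup_inf_eq_of_le (hH : finrank K H + 1 = finrank K V) (hy : ¬ y ≤ H) (hyu : y ≤ u) :
    y ⊔ H ⊓ u = u := by
  rw [← sup_inf_assoc_of_le H hyu, sup_comm, sup_eq_top_of_not_le hH hy, top_inf_eq]

theorem finrank_sup_of_inf_le (hH : finrank K H + 1 = finrank K V) (hy : ¬ y ≤ H) (hw : w ≤ H)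
    (h : H ⊓ y ≤ w) (hdim : finrank K ↥(H ⊓ y) + 1 = finrank K w) :
    finrank K ↥(y ⊔ w) = finrank K y + 1 := by
  have hyw : y ⊓ w = H ⊓ y :=
    le_antisymm (le_inf (inf_le_right.trans hw) inf_le_left) (le_inf inf_le_right h)
  have := finrank_sup_add_finrank_inf_eq y w
  have := finrank_inf_add_one_of_not_le hH hy
  rw [hyw] at *
  omega

end Hyperplane

section Counting

variable {K V : Type*} [Field K] [Fintype K] [AddCommGroup V] [Module K V] [Fintype V]

open Classical in
theorem card_mem_notMem {A B : Submodule K V} (hA : finrank K ↥(B ⊓ A) + 1 = finrank K A) :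
    #{v | v ∈ A ∧ v ∉ B} = Fintype.card K ^ finrank K ↥(B ⊓ A) * (Fintype.card K - 1) := by
  have hcard (S : Submodule K V) : #{v | v ∈ S} = Fintype.card K ^ finrank K S := by
    rw [← Fintype.card_subtype, ← card_eq_pow_finrank]
  have hsplit := card_filter_add_card_filter_not (s := ({v | v ∈ A} : Finset V)) (· ∈ B)
  simp only [filter_filter] at hsplit
  have hBA : #{v | v ∈ A ∧ v ∈ B} = Fintype.card K ^ finrank K ↥(B ⊓ A) := by
    rw [← hcard]
    congr 1
    ext v
    simp [and_comm]
  rw [hBA, hcard, ← hA, pow_succ] at hsplit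
  rw [Nat.mul_sub_one]
  omega

open Classical in
/-- Each `v ∈ Y \ H` spans one such `u = w ⊔ ⟨v⟩`, and each `u` is spanned in this way by the
`q ^ dim w * (q - 1)` vectors of `u \ H`. -/
theorem card_covBy_not_le {H w Y : Submodule K V} (hY : finrank K ↥(H ⊓ Y) + 1 = finrank K Y)
    (hwH : w ≤ H) (hwY : w ≤ Y) :
    #{u : Submodule K V | w ≤ u ∧ u ≤ Y ∧ finrank K u = finrank K w + 1 ∧ ¬ u ≤ H}
      = Fintype.card K ^ (finrank K ↥(H ⊓ Y) - finrank K w) := by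
  set q := Fintype.card K
  have hmaps : ∀ v ∈ ({v | v ∈ Y ∧ v ∉ H} : Finset V),
      w ⊔ K ∙ v ∈ ({u | w ≤ u ∧ u ≤ Y ∧ finrank K u = finrank K w + 1 ∧ ¬ u ≤ H} :
        Finset (Submodule K V)) := by
    simp only [mem_filter, mem_univ, true_and]
    rintro v ⟨hvY, hvH⟩
    exact ⟨le_sup_left, sup_le hwY ((span_singleton_le_iff_mem v Y).mpr hvY),
      finrank_sup_span_singleton fun hvw => hvH (hwH hvw),
      fun h => hvH (h (mem_sup_right (mem_span_singleton_self v)))⟩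
  have hfiber : ∀ u ∈ ({u | w ≤ u ∧ u ≤ Y ∧ finrank K u = finrank K w + 1 ∧ ¬ u ≤ H} :
        Finset (Submodule K V)),
      #{v ∈ ({v | v ∈ Y ∧ v ∉ H} : Finset V) | w ⊔ K ∙ v = u} = q ^ finrank K w * (q - 1) := by
    simp only [mem_filter, mem_univ, true_and]
    rintro u ⟨hwu, huY, hdim, huH⟩
    have hHu := inf_eq_of_finrank_eq_add_one hwH hwu huH hdim
    have hcard := card_mem_notMem (A := u) (B := H) (by rw [hHu, hdim])
    rw [hHu] at hcard
    rw [← hcard]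
    congr 1
    ext v
    simp only [mem_filter, mem_univ, true_and]
    constructor
    · rintro ⟨⟨-, hvH⟩, rfl⟩
      exact ⟨mem_sup_right (mem_span_singleton_self v), hvH⟩
    · rintro ⟨hvu, hvH⟩
      refine ⟨⟨huY hvu, hvH⟩, eq_of_le_of_finrank_le
        (sup_le hwu ((span_singleton_le_iff_mem v u).mpr hvu)) ?_⟩
      rw [finrank_sup_span_singleton fun hvw => hvH (hwH hvw), hdim]
  have hcount := card_eq_sum_card_fiberwise hmaps
  rw [sum_congr rfl hfiber, sum_const, smul_eq_mul, card_mem_notMem hY] at hcount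
  have hq : 0 < q ^ finrank K w * (q - 1) :=
    Nat.mul_pos (pow_pos Fintype.card_pos _) (Nat.sub_pos_of_lt Fintype.one_lt_card)
  refine Nat.eq_of_mul_eq_mul_right hq ?_
  rw [← hcount, ← mul_assoc, ← pow_add,
    Nat.sub_add_cancel (finrank_mono (le_inf hwH hwY) : finrank K w ≤ finrank K ↥(H ⊓ Y))]

end Counting

section Transvections

variable {F : Type} [Field F] {n : ℕ} {H : Submodule F (Fin n → F)}
  {g : (Fin n → F) ≃ₗ[F] (Fin n → F)}

theorem smap_le_iff (hg : ∀ w ∈ H, g w = w) (y : Submodule F (Fin n → F)) :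
    smap F n g y ≤ H ↔ y ≤ H := by
  constructor
  · intro h u hu
    have hgu : g u ∈ H := h (mem_map_of_mem hu)
    rwa [g.injective (hg _ hgu)] at hgu
  · rintro h _ ⟨u, hu, rfl⟩
    rw [LinearEquiv.coe_coe, hg u (h hu)]
    exact h hu

theorem inf_smap (hg : ∀ w ∈ H, g w = w) (y : Submodule F (Fin n → F)) :
    H ⊓ smap F n g y = H ⊓ y := by
  ext w
  simp only [Submodule.mem_inf, smap, Submodule.mem_map, LinearEquiv.coe_coe]
  constructor
  · rintro ⟨hwH, u, hu, rfl⟩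
    have hgu : g u = u := g.injective (hg _ hwH)
    rw [hgu] at hwH ⊢
    exact ⟨hwH, hu⟩
  · rintro ⟨hwH, hwy⟩
    exact ⟨hwH, w, hwy, hg w hwH⟩

theorem exists_mem_Gsub_smap_eq [Fintype F] (hH : finrank F H + 1 = finrank F (Fin n → F))
    {y y' : Submodule F (Fin n → F)} (hy : ¬ y ≤ H) (hy' : ¬ y' ≤ H) (hyy' : H ⊓ y = H ⊓ y') :
    ∃ g ∈ Gsub F n H, smap F n g y = y' := by
  obtain ⟨u₁, hu₁y, hu₁H⟩ := SetLike.not_le_iff_exists.mp hy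
  obtain ⟨u₂, hu₂y', hu₂H⟩ := SetLike.not_le_iff_exists.mp hy'
  have hspan_le {u : Fin n → F} (hu : u ∉ H) : ¬ F ∙ u ≤ H :=
    fun h => hu (h (mem_span_singleton_self u))
  obtain ⟨f, hfu₁, hfH⟩ := exists_dual_map_eq_bot_of_notMem hu₁H inferInstance
  have hf : ∀ w ∈ H, f w = 0 := fun w hw => (mem_bot F).1 (hfH ▸ mem_map_of_mem hw)
  have hu₂ : u₂ ∈ H ⊔ F ∙ u₁ := by rw [sup_eq_top_of_not_le hH (hspan_le hu₁H)]; trivial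
  obtain ⟨h₀, hh₀, _, hc, hu₂_eq⟩ := mem_sup.1 hu₂
  obtain ⟨c, rfl⟩ := mem_span_singleton.1 hc
  have hc : c ≠ 0 := fun hc => hu₂H (by rwa [← hu₂_eq, hc, zero_smul, add_zero])
  -- `τ` fixes `H` pointwise and sends `u₁ = c⁻¹ • (u₂ - h₀)` to `c⁻¹ • u₂`
  set τ := LinearEquiv.transvection (f := f) (v := (f u₁)⁻¹ • c⁻¹ • h₀)
    (by rw [map_smul, map_smul, hf h₀ hh₀, smul_zero, smul_zero])
  have hτH : ∀ w ∈ H, τ w = w := fun w hw => by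
    rw [LinearEquiv.transvection.apply, hf w hw, zero_smul, add_zero]
  have hτu₁ : F ∙ (τ : (Fin n → F) →ₗ[F] (Fin n → F)) u₁ = F ∙ u₂ := by
    rw [LinearEquiv.coe_coe, LinearEquiv.transvection.apply, smul_smul, mul_inv_cancel₀ hfu₁,
      one_smul, ← inv_smul_smul₀ hc u₁, ← smul_add, add_comm, hu₂_eq]
    exact span_singleton_smul_eq (inv_ne_zero hc).isUnit _
  refine ⟨τ, ⟨LinearEquiv.transvection.det_eq_one _, hτH⟩, ?_⟩
  have hτy := sup_inf_eq_of_le hH (hτu₁ ▸ hspan_le hu₂H)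
    ((span_singleton_le_iff_mem _ (smap F n τ y)).2 (mem_map_of_mem hu₁y))
  rw [← hτy, inf_smap hτH, hτu₁, hyy',
    sup_inf_eq_of_le hH (hspan_le hu₂H) ((span_singleton_le_iff_mem _ _).2 hu₂y')]

end Transvections

theorem Matrix.mulVec_ite_apply {ι : Type*} [Fintype ι] (P : ι → ι → Prop)
    [∀ y z, Decidable (P y z)] (v : ι → ℂ) (y : ι) :
    Matrix.mulVec (fun y z => if P y z then 1 else 0) v y = ∑ z with P y z, v z := by
  simp [Matrix.mulVec, dotProduct, sum_filter]

section Matrices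

open Classical

variable {F : Type} [Field F] [Fintype F] {n : ℕ} {x H : Submodule F (Fin n → F)}
  {v : Submodule F (Fin n → F) → ℂ}

theorem rthreeT_mulVec (hH : finrank F H + 1 = finrank F (Fin n → F)) (hxH : x ≤ H)
    (hv : ∀ y, ¬ y ≤ H → v y = 0) :
    (RthreeT F n x H).mulVec v = fun y => if y ≤ H then 0 else v (H ⊓ y) := by
  ext y
  unfold RthreeT
  rw [Matrix.mulVec_ite_apply]
  split_ifs with hy
  · refine sum_eq_zero fun z hz => hv z fun hzH => ?_
    obtain ⟨-, hdim, -, hH⟩ := (mem_filter.1 hz).2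
    rw [inf_of_le_right hzH, inf_of_le_right hy] at hH
    omega
  · refine sum_eq_single_of_mem _ ?_ fun z hz hne => hv z fun hzH => hne ?_
    · simp only [mem_filter, mem_univ, true_and]
      exact ⟨inf_le_right, finrank_inf_add_one_of_not_le hH hy, by rw [inf_inf_of_le hxH],
        by rw [inf_left_idem]⟩
    · obtain ⟨hzy, hdim, -, -⟩ := (mem_filter.1 hz).2
      have := finrank_inf_add_one_of_not_le hH hy
      exact eq_of_le_of_finrank_le (le_inf hzH hzy) (by omega)

/-- With `C = (· + 1 = ·)` this is `L̃₁`, with `C = (· = ·)` it is `L̃₂`; likewise `lowerRel` gives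
`L₁`, `L₂` and `raiseT`, `raiseRel` give `R̃₁`, `R̃₂`, `R₁`, `R₂`. -/
noncomputable def lowerT (x H : Submodule F (Fin n → F)) (C : ℕ → ℕ → Prop) [DecidableRel C] :
    Matrix (Submodule F (Fin n → F)) (Submodule F (Fin n → F)) ℂ :=
  fun y z => if y ≤ z ∧ finrank F y + 1 = finrank F z ∧
    C (finrank F ↥(x ⊓ y)) (finrank F ↥(x ⊓ z)) ∧
    finrank F ↥(H ⊓ y) + 1 = finrank F ↥(H ⊓ z) then 1 else 0

noncomputable def lowerRel (x H : Submodule F (Fin n → F)) (C : ℕ → ℕ → Prop)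
    [DecidableRel C] : Matrix (Submodule F (Fin n → F)) (Submodule F (Fin n → F)) ℂ :=
  fun y z => if z ≤ H ∧ y ≤ z ∧ finrank F y + 1 = finrank F z ∧
    C (finrank F ↥(x ⊓ y)) (finrank F ↥(x ⊓ z)) then 1 else 0

theorem lowerRel_mulVec_of_not_le (C : ℕ → ℕ → Prop) [DecidableRel C]
    {y : Submodule F (Fin n → F)} (hy : ¬ y ≤ H) : (lowerRel x H C).mulVec v y = 0 := by
  unfold lowerRel
  rw [Matrix.mulVec_ite_apply]
  exact sum_eq_zero fun z hz => absurd ((mem_filter.1 hz).2.2.1.trans (mem_filter.1 hz).2.1) hy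

theorem lowerT_mulVec_rthreeT (hH : finrank F H + 1 = finrank F (Fin n → F)) (hxH : x ≤ H)
    (C : ℕ → ℕ → Prop) [DecidableRel C] (hv : ∀ y, ¬ y ≤ H → v y = 0) :
    (lowerT x H C).mulVec ((RthreeT F n x H).mulVec v)
      = (RthreeT F n x H).mulVec ((lowerRel x H C).mulVec v) := by
  rw [rthreeT_mulVec hH hxH hv, rthreeT_mulVec hH hxH fun _ => lowerRel_mulVec_of_not_le C]
  ext y
  unfold lowerT
  rw [Matrix.mulVec_ite_apply]
  split_ifs with hy
  · refine sum_eq_zero fun u hu => if_pos (by_contra fun huH => ?_)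
    obtain ⟨-, hdim, -, hHdim⟩ := (mem_filter.1 hu).2
    have := finrank_inf_add_one_of_not_le hH huH
    rw [inf_of_le_right hy] at hHdim
    omega
  unfold lowerRel
  rw [Matrix.mulVec_ite_apply]
  refine sum_nbij' (H ⊓ ·) (y ⊔ ·) ?_ ?_ ?_ ?_ ?_
  · simp only [mem_filter, mem_univ, true_and]
    rintro u ⟨hyu, -, hC, hHu⟩
    exact ⟨inf_le_left, inf_le_inf_left H hyu, hHu, by rwa [inf_inf_of_le hxH,
      inf_inf_of_le hxH]⟩
  · simp only [mem_filter, mem_univ, true_and]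
    rintro w ⟨hwH, hyw, hwdim, hC⟩
    have hHw := inf_sup_eq_of_le_of_inf_le hwH hyw
    refine ⟨le_sup_left, (finrank_sup_of_inf_le hH hy hwH hyw hwdim).symm, ?_, by rwa [hHw]⟩
    rwa [← inf_inf_of_le hxH y, ← inf_inf_of_le hxH (y ⊔ w), hHw]
  · simp only [mem_filter, mem_univ, true_and]
    rintro u ⟨hyu, -⟩
    exact sup_inf_eq_of_le hH hy hyu
  · simp only [mem_filter, mem_univ, true_and]
    rintro w ⟨hwH, hyw, -⟩
    exact inf_sup_eq_of_le_of_inf_le hwH hyw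
  · simp only [mem_filter, mem_univ, true_and]
    rintro u ⟨hyu, -⟩
    exact if_neg fun huH => hy (hyu.trans huH)

noncomputable def raiseT (x H : Submodule F (Fin n → F)) (C : ℕ → ℕ → Prop) [DecidableRel C] :
    Matrix (Submodule F (Fin n → F)) (Submodule F (Fin n → F)) ℂ :=
  fun y z => if z ≤ y ∧ finrank F z + 1 = finrank F y ∧
    C (finrank F ↥(x ⊓ z)) (finrank F ↥(x ⊓ y)) ∧
    finrank F ↥(H ⊓ z) + 1 = finrank F ↥(H ⊓ y) then 1 else 0

noncomputable def raiseRel (x H : Submodule F (Fin n → F)) (C : ℕ → ℕ → Prop)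
    [DecidableRel C] : Matrix (Submodule F (Fin n → F)) (Submodule F (Fin n → F)) ℂ :=
  fun y z => if y ≤ H ∧ z ≤ y ∧ finrank F z + 1 = finrank F y ∧
    C (finrank F ↥(x ⊓ z)) (finrank F ↥(x ⊓ y)) then 1 else 0

theorem raiseRel_mulVec_of_not_le (C : ℕ → ℕ → Prop) [DecidableRel C]
    {y : Submodule F (Fin n → F)} (hy : ¬ y ≤ H) : (raiseRel x H C).mulVec v y = 0 := by
  unfold raiseRel
  rw [Matrix.mulVec_ite_apply]
  exact sum_eq_zero fun z hz => absurd (mem_filter.1 hz).2.1 hy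

theorem raiseT_mulVec_rthreeT (hH : finrank F H + 1 = finrank F (Fin n → F)) (hxH : x ≤ H)
    (C : ℕ → ℕ → Prop) [DecidableRel C] (hv : ∀ y, ¬ y ≤ H → v y = 0) :
    (raiseT x H C).mulVec ((RthreeT F n x H).mulVec v)
      = (Fintype.card F : ℂ) • (RthreeT F n x H).mulVec ((raiseRel x H C).mulVec v) := by
  rw [rthreeT_mulVec hH hxH hv, rthreeT_mulVec hH hxH fun _ => raiseRel_mulVec_of_not_le C]
  ext y
  unfold raiseT
  rw [Matrix.mulVec_ite_apply, Pi.smul_apply, smul_eq_mul]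
  split_ifs with hy
  · rw [mul_zero]
    exact sum_eq_zero fun u hu => if_pos ((mem_filter.1 hu).2.1.trans hy)
  unfold raiseRel
  rw [Matrix.mulVec_ite_apply, sum_ite, sum_const_zero, zero_add, filter_filter, mul_sum]
  refine (sum_fiberwise_of_maps_to (g := (H ⊓ ·)) ?_ _).symm.trans
    (sum_congr rfl fun w hw => ?_)
  · simp only [mem_filter, mem_univ, true_and]
    rintro u ⟨⟨huy, -, hC, hHu⟩, -⟩
    exact ⟨inf_le_left, inf_le_inf_left H huy, hHu, by rwa [inf_inf_of_le hxH,
      inf_inf_of_le hxH]⟩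
  obtain ⟨-, hwy, hwdim, hC⟩ := (mem_filter.1 hw).2
  have hwH : w ≤ H := hwy.trans inf_le_left
  have hcount := card_covBy_not_le (finrank_inf_add_one_of_not_le hH hy) hwH
    (hwy.trans inf_le_right)
  rw [← hwdim, Nat.add_sub_cancel_left, pow_one] at hcount
  rw [sum_congr rfl fun u hu => congrArg v (mem_filter.1 hu).2, sum_const, nsmul_eq_mul,
    ← hcount, Nat.cast_inj.2]
  congr 1
  ext u
  simp only [mem_filter, mem_univ, true_and]
  constructor
  · rintro ⟨⟨⟨huy, -⟩, huH⟩, rfl⟩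
    exact ⟨inf_le_right, huy, (finrank_inf_add_one_of_not_le hH huH).symm, huH⟩
  · rintro ⟨hwu, huy, hudim, huH⟩
    have hHu := inf_eq_of_finrank_eq_add_one hwH hwu huH hudim
    have := finrank_inf_add_one_of_not_le hH hy
    refine ⟨⟨⟨huy, by omega, ?_, by rwa [hHu]⟩, huH⟩, hHu⟩
    rwa [← inf_inf_of_le hxH u, ← inf_inf_of_le hxH y, hHu]

theorem lthreeT_mulVec_rthreeT (hH : finrank F H + 1 = finrank F (Fin n → F)) (hxH : x ≤ H)
    (hv : ∀ y, ¬ y ≤ H → v y = 0) :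
    (LthreeT F n x H).mulVec ((RthreeT F n x H).mulVec v)
      = fun y : Submodule F (Fin n → F) =>
        (Fintype.card F : ℂ) ^ (finrank F H - finrank F y) * v y := by
  rw [rthreeT_mulVec hH hxH hv]
  ext y
  unfold LthreeT
  rw [Matrix.mulVec_ite_apply]
  by_cases hy : y ≤ H
  · have hcover : ∀ u, y ≤ u → finrank F y + 1 = finrank F u → (¬ u ≤ H ↔
        finrank F ↥(x ⊓ y) = finrank F ↥(x ⊓ u) ∧ finrank F ↥(H ⊓ y) = finrank F ↥(H ⊓ u)) := by
      intro u hyu hdim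
      constructor
      · intro huH
        have hHu := inf_eq_of_finrank_eq_add_one hy hyu huH hdim.symm
        rw [inf_of_le_right hy, hHu, ← hHu, inf_inf_of_le hxH]
        exact ⟨rfl, rfl⟩
      · rintro ⟨-, hHdim⟩ huH
        rw [inf_of_le_right hy, inf_of_le_right huH] at hHdim
        omega
    have hcount := card_covBy_not_le (Y := ⊤) (by rwa [inf_top_eq, finrank_top]) hy le_top
    rw [inf_top_eq] at hcount
    rw [sum_congr rfl (g := fun _ => v y) ?_, sum_const, nsmul_eq_mul, ← Nat.cast_pow, ← hcount]
    · congr 3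
      ext u
      simp only [mem_filter, mem_univ, true_and, le_top]
      constructor
      · rintro ⟨hyu, hdim, hx, hH⟩
        exact ⟨hyu, hdim.symm, (hcover u hyu hdim).2 ⟨hx, hH⟩⟩
      · rintro ⟨hyu, hdim, huH⟩
        exact ⟨hyu, hdim.symm, (hcover u hyu hdim.symm).1 huH⟩
    · simp only [mem_filter, mem_univ, true_and]
      rintro u ⟨hyu, hdim, hx, hH⟩
      have huH := (hcover u hyu hdim).2 ⟨hx, hH⟩
      rw [if_neg huH, inf_eq_of_finrank_eq_add_one hy hyu huH hdim.symm]
  · rw [hv y hy, mul_zero]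
    refine sum_eq_zero fun u hu => if_pos (by_contra fun huH => ?_)
    obtain ⟨-, hdim, -, hHdim⟩ := (mem_filter.1 hu).2
    have := finrank_inf_add_one_of_not_le hH hy
    have := finrank_inf_add_one_of_not_le hH huH
    omega

theorem rthreeT_mulVec_eq_zero {w : Submodule F (Fin n → F) → ℂ}
    (hH : finrank F H + 1 = finrank F (Fin n → F)) (hw : ∀ z, z ≤ H → w z = 0) :
    (RthreeT F n x H).mulVec w = 0 := by
  ext y
  unfold RthreeT
  rw [Matrix.mulVec_ite_apply, Pi.zero_apply]
  refine sum_eq_zero fun z hz => by_contra fun hwz => ?_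
  obtain ⟨hzy, hdim, -, hHdim⟩ := (mem_filter.1 hz).2
  have hzH : ¬ z ≤ H := fun hzH => hwz (hw z hzH)
  have := finrank_inf_add_one_of_not_le hH hzH
  have := finrank_inf_add_one_of_not_le hH fun hyH => hzH (hzy.trans hyH)
  omega

theorem estarRel_mulVec_apply (i j : ℤ) (y : Submodule F (Fin n → F)) :
    (EstarRel F n x H i j).mulVec v y = if y ≤ H ∧ (finrank F ↥(x ⊓ y) : ℤ) = i ∧
      (finrank F y : ℤ) = i + j then v y else 0 := by
  rw [EstarRel, Matrix.mulVec_diagonal, ite_mul, one_mul, zero_mul]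

theorem estarRel_mulVec_of_not_le (i j : ℤ) {y : Submodule F (Fin n → F)} (hy : ¬ y ≤ H) :
    (EstarRel F n x H i j).mulVec v y = 0 := by
  rw [estarRel_mulVec_apply, if_neg fun h => hy h.1]

theorem estarT_mulVec_apply (i j k : ℤ) (y : Submodule F (Fin n → F)) :
    (EstarT F n x H i j k).mulVec v y = if PtMem F n x H i j k y then v y else 0 := by
  rw [EstarT, Matrix.mulVec_diagonal, ite_mul, one_mul, zero_mul]

theorem lthreeT_mulVec_rthreeT_estarRel (hH : finrank F H + 1 = finrank F (Fin n → F))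
    (hxH : x ≤ H) (i j : ℕ) :
    (LthreeT F n x H).mulVec ((RthreeT F n x H).mulVec ((EstarRel F n x H i j).mulVec v))
      = (Fintype.card F : ℂ) ^ (finrank F H - (i + j)) • (EstarRel F n x H i j).mulVec v := by
  rw [lthreeT_mulVec_rthreeT hH hxH fun _ => estarRel_mulVec_of_not_le i j]
  ext y
  rw [Pi.smul_apply, smul_eq_mul, estarRel_mulVec_apply]
  split_ifs with h
  · rw [show finrank F y = i + j by exact_mod_cast h.2.2]
  · rw [mul_zero, mul_zero]

theorem estarT_zero_mulVec_rthreeT (hH : finrank F H + 1 = finrank F (Fin n → F)) (hxH : x ≤ H)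
    (hv : ∀ y, ¬ y ≤ H → v y = 0) (i j : ℤ) :
    (EstarT F n x H i j 0).mulVec ((RthreeT F n x H).mulVec v) = 0 := by
  ext y
  rw [estarT_mulVec_apply, rthreeT_mulVec hH hxH hv, Pi.zero_apply]
  beta_reduce
  by_cases hy : y ≤ H
  · rw [if_pos hy, ite_self]
  rw [if_neg]
  rintro ⟨-, hHy, hy'⟩
  have := finrank_inf_add_one_of_not_le hH hy
  omega

theorem estarT_one_mulVec_rthreeT (hH : finrank F H + 1 = finrank F (Fin n → F)) (hxH : x ≤ H)
    (hv : ∀ y, ¬ y ≤ H → v y = 0) (i j : ℤ) :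
    (EstarT F n x H i j 1).mulVec ((RthreeT F n x H).mulVec v)
      = (RthreeT F n x H).mulVec ((EstarRel F n x H i j).mulVec v) := by
  rw [rthreeT_mulVec hH hxH hv, rthreeT_mulVec hH hxH fun _ => estarRel_mulVec_of_not_le i j]
  ext y
  rw [estarT_mulVec_apply, estarRel_mulVec_apply]
  by_cases hy : y ≤ H
  · rw [if_pos hy, if_pos hy, ite_self]
  rw [if_neg hy, if_neg hy]
  refine if_congr ?_ rfl rfl
  have := finrank_inf_add_one_of_not_le hH hy
  rw [PtMem, inf_inf_of_le hxH]
  constructor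
  · rintro ⟨hx, hHy, -⟩
    exact ⟨inf_le_left, hx, hHy⟩
  · rintro ⟨-, hx, hHy⟩
    exact ⟨hx, hHy, by omega⟩

theorem rthreeT_mulVec_mem_Mcomp (hH : finrank F H + 1 = finrank F (Fin n → F)) (hxH : x ≤ H)
    (hv : ∀ y, ¬ y ≤ H → v y = 0) :
    (RthreeT F n x H).mulVec v ∈ Mcomp F n H (1 : Gsub F n H →* ℂ) {y | ¬ y ≤ H} := by
  rw [rthreeT_mulVec hH hxH hv]
  refine ⟨fun y hy => if_pos (not_not.1 hy), fun g y => ?_⟩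
  have hg : ∀ w ∈ H, ((g⁻¹ : Gsub F n H) : (Fin n → F) ≃ₗ[F] (Fin n → F)) w = w :=
    (g⁻¹ : Gsub F n H).2.2
  simp only [MonoidHom.one_apply, one_mul, smap_le_iff hg, inf_smap hg]

theorem rthreeT_mulVec_injective (hH : finrank F H + 1 = finrank F (Fin n → F)) (hxH : x ≤ H)
    {w : Submodule F (Fin n → F) → ℂ} (hv : ∀ y, ¬ y ≤ H → v y = 0)
    (hw : ∀ y, ¬ y ≤ H → w y = 0) (h : (RthreeT F n x H).mulVec v = (RthreeT F n x H).mulVec w) :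
    v = w := by
  rw [rthreeT_mulVec hH hxH hv, rthreeT_mulVec hH hxH hw] at h
  obtain ⟨u, hu⟩ := exists_notMem_of_finrank_add_one hH
  ext y
  by_cases hy : y ≤ H
  · have hyu : ¬ y ⊔ F ∙ u ≤ H := fun h' => hu (h' (mem_sup_right (mem_span_singleton_self u)))
    simpa only [if_neg hyu, inf_sup_span_singleton_eq hy hu] using congrFun h (y ⊔ F ∙ u)
  · rw [hv y hy, hw y hy]

theorem exists_rthreeT_mulVec_eq (hH : finrank F H + 1 = finrank F (Fin n → F)) (hxH : x ≤ H)
    {m : Submodule F (Fin n → F) → ℂ} (hm : m ∈ Mcomp F n H 1 {y | ¬ y ≤ H}) :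
    ∃ v : Submodule F (Fin n → F) → ℂ,
      (∀ y, ¬ y ≤ H → v y = 0) ∧ (RthreeT F n x H).mulVec v = m := by
  obtain ⟨hm0, hmG⟩ := hm
  obtain ⟨u, hu⟩ := exists_notMem_of_finrank_add_one hH
  refine ⟨fun z => if z ≤ H then m (z ⊔ F ∙ u) else 0, fun y hy => if_neg hy, ?_⟩
  rw [rthreeT_mulVec hH hxH fun y hy => if_neg hy]
  ext y
  by_cases hy : y ≤ H
  · rw [if_pos hy]
    exact (hm0 y (not_not.2 hy)).symm
  have hyu : ¬ H ⊓ y ⊔ F ∙ u ≤ H :=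
    fun h' => hu (h' (mem_sup_right (mem_span_singleton_self u)))
  obtain ⟨g, hg, hgy⟩ := exists_mem_Gsub_smap_eq hH hy hyu
    (by rw [inf_sup_span_singleton_eq inf_le_left hu])
  have hinv := hmG ⟨g, hg⟩⁻¹ y
  rw [inv_inv, MonoidHom.one_apply, one_mul] at hinv
  rw [if_neg hy, if_pos inf_le_left, ← hgy]
  exact hinv

end Matrices

open Classical in
theorem Rthree_iso_general (F : Type) [Field F] [Fintype F] (a b : ℕ)
    (x H : Submodule F (Fin (a + b + 1) → F))
    (hH : finrank F H = a + b) (hxH : x ≤ H) :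
    (∀ v w : Submodule F (Fin (a + b + 1) → F) → ℂ,
      (∀ y, ¬y ≤ H → v y = 0) → (∀ y, ¬y ≤ H → w y = 0) →
      (RthreeT F (a + b + 1) x H).mulVec v = (RthreeT F (a + b + 1) x H).mulVec w →
      v = w)
    ∧ (∀ v : Submodule F (Fin (a + b + 1) → F) → ℂ, (∀ y, ¬y ≤ H → v y = 0) →
        (RthreeT F (a + b + 1) x H).mulVec v
          ∈ Mcomp F (a + b + 1) H (1 : Gsub F (a + b + 1) H →* ℂ) {y | ¬y ≤ H})
    ∧ (∀ m ∈ Mcomp F (a + b + 1) H (1 : Gsub F (a + b + 1) H →* ℂ) {y | ¬y ≤ H},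
        ∃ v : Submodule F (Fin (a + b + 1) → F) → ℂ,
          (∀ y, ¬y ≤ H → v y = 0) ∧ (RthreeT F (a + b + 1) x H).mulVec v = m)
    ∧ ∀ v : Submodule F (Fin (a + b + 1) → F) → ℂ, (∀ y, ¬y ≤ H → v y = 0) →
        ((LoneT F (a + b + 1) x H).mulVec ((RthreeT F (a + b + 1) x H).mulVec v)
            = (RthreeT F (a + b + 1) x H).mulVec ((LoneRel F (a + b + 1) x H).mulVec v))
        ∧ ((LtwoT F (a + b + 1) x H).mulVec ((RthreeT F (a + b + 1) x H).mulVec v)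
            = (RthreeT F (a + b + 1) x H).mulVec ((LtwoRel F (a + b + 1) x H).mulVec v))
        ∧ (∀ i j : ℕ, i ≤ a → j ≤ b →
            (LthreeT F (a + b + 1) x H).mulVec ((RthreeT F (a + b + 1) x H).mulVec
                ((EstarRel F (a + b + 1) x H i j).mulVec v))
              = (Fintype.card F : ℂ) ^ ((a : ℤ) + b - i - j) •
                  (EstarRel F (a + b + 1) x H i j).mulVec v)
        ∧ ((RoneT F (a + b + 1) x H).mulVec ((RthreeT F (a + b + 1) x H).mulVec v)
            = (Fintype.card F : ℂ) •
                (RthreeT F (a + b + 1) x H).mulVec ((RoneRel F (a + b + 1) x H).mulVec v))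
        ∧ ((RtwoT F (a + b + 1) x H).mulVec ((RthreeT F (a + b + 1) x H).mulVec v)
            = (Fintype.card F : ℂ) •
                (RthreeT F (a + b + 1) x H).mulVec ((RtwoRel F (a + b + 1) x H).mulVec v))
        ∧ ((RthreeT F (a + b + 1) x H).mulVec ((RthreeT F (a + b + 1) x H).mulVec v) = 0)
        ∧ (∀ i j : ℕ, i ≤ a → j ≤ b →
            (EstarT F (a + b + 1) x H i j 0).mulVec ((RthreeT F (a + b + 1) x H).mulVec v)
              = 0)
        ∧ (∀ i j : ℕ, i ≤ a → j ≤ b →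
            (EstarT F (a + b + 1) x H i j 1).mulVec ((RthreeT F (a + b + 1) x H).mulVec v)
              = (RthreeT F (a + b + 1) x H).mulVec
                  ((EstarRel F (a + b + 1) x H i j).mulVec v)) := by
  have hH' : finrank F H + 1 = finrank F (Fin (a + b + 1) → F) := by rw [finrank_fin_fun, hH]
  refine ⟨fun v w hv hw => rthreeT_mulVec_injective hH' hxH hv hw,
    fun v hv => rthreeT_mulVec_mem_Mcomp hH' hxH hv,
    fun m hm => exists_rthreeT_mulVec_eq hH' hxH hm,
    fun v hv => ⟨lowerT_mulVec_rthreeT hH' hxH (· + 1 = ·) hv,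
      lowerT_mulVec_rthreeT hH' hxH (· = ·) hv, fun i j hi hj => ?_,
      raiseT_mulVec_rthreeT hH' hxH (· + 1 = ·) hv, raiseT_mulVec_rthreeT hH' hxH (· = ·) hv,
      rthreeT_mulVec_eq_zero hH' fun z hz => by rw [rthreeT_mulVec hH' hxH hv]; exact if_pos hz,
      fun i j _ _ => estarT_zero_mulVec_rthreeT hH' hxH hv i j,
      fun i j _ _ => estarT_one_mulVec_rthreeT hH' hxH hv i j⟩⟩
  rw [lthreeT_mulVec_rthreeT_estarRel hH' hxH, hH, ← zpow_natCast, Nat.cast_sub (by omega)]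
  congr 2
  push_cast
  ring

open Classical in
/-- `R̃₃` maps `ℂP̃₀` bijectively onto `M(1_G)`, and the stated
commutation identities hold on `ℂP(x,H) = ℂP̃₀`. -/
theorem Rthree_iso (F : Type) [Field F] [Fintype F] (a b : ℕ)
    (x H : Submodule F (Fin (a + b + 1) → F))
    (hx : finrank F x = a) (hH : finrank F H = a + b) (hxH : x ≤ H)
    [Fintype (Gsub F (a + b + 1) H)] :
    (∀ v w : Submodule F (Fin (a + b + 1) → F) → ℂ,
      (∀ y, ¬y ≤ H → v y = 0) → (∀ y, ¬y ≤ H → w y = 0) →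
      (RthreeT F (a + b + 1) x H).mulVec v = (RthreeT F (a + b + 1) x H).mulVec w →
      v = w)
    ∧ (∀ v : Submodule F (Fin (a + b + 1) → F) → ℂ, (∀ y, ¬y ≤ H → v y = 0) →
        (RthreeT F (a + b + 1) x H).mulVec v
          ∈ Mcomp F (a + b + 1) H (1 : Gsub F (a + b + 1) H →* ℂ) {y | ¬y ≤ H})
    ∧ (∀ m ∈ Mcomp F (a + b + 1) H (1 : Gsub F (a + b + 1) H →* ℂ) {y | ¬y ≤ H},
        ∃ v : Submodule F (Fin (a + b + 1) → F) → ℂ,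
          (∀ y, ¬y ≤ H → v y = 0) ∧ (RthreeT F (a + b + 1) x H).mulVec v = m)
    ∧ ∀ v : Submodule F (Fin (a + b + 1) → F) → ℂ, (∀ y, ¬y ≤ H → v y = 0) →
        ((LoneT F (a + b + 1) x H).mulVec ((RthreeT F (a + b + 1) x H).mulVec v)
            = (RthreeT F (a + b + 1) x H).mulVec ((LoneRel F (a + b + 1) x H).mulVec v))
        ∧ ((LtwoT F (a + b + 1) x H).mulVec ((RthreeT F (a + b + 1) x H).mulVec v)
            = (RthreeT F (a + b + 1) x H).mulVec ((LtwoRel F (a + b + 1) x H).mulVec v))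
        ∧ (∀ i j : ℕ, i ≤ a → j ≤ b →
            (LthreeT F (a + b + 1) x H).mulVec ((RthreeT F (a + b + 1) x H).mulVec
                ((EstarRel F (a + b + 1) x H i j).mulVec v))
              = (Fintype.card F : ℂ) ^ ((a : ℤ) + b - i - j) •
                  (EstarRel F (a + b + 1) x H i j).mulVec v)
        ∧ ((RoneT F (a + b + 1) x H).mulVec ((RthreeT F (a + b + 1) x H).mulVec v)
            = (Fintype.card F : ℂ) •
                (RthreeT F (a + b + 1) x H).mulVec ((RoneRel F (a + b + 1) x H).mulVec v))
        ∧ ((RtwoT F (a + b + 1) x H).mulVec ((RthreeT F (a + b + 1) x H).mulVec v)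
            = (Fintype.card F : ℂ) •
                (RthreeT F (a + b + 1) x H).mulVec ((RtwoRel F (a + b + 1) x H).mulVec v))
        ∧ ((RthreeT F (a + b + 1) x H).mulVec ((RthreeT F (a + b + 1) x H).mulVec v) = 0)
        ∧ (∀ i j : ℕ, i ≤ a → j ≤ b →
            (EstarT F (a + b + 1) x H i j 0).mulVec ((RthreeT F (a + b + 1) x H).mulVec v)
              = 0)
        ∧ (∀ i j : ℕ, i ≤ a → j ≤ b →
            (EstarT F (a + b + 1) x H i j 1).mulVec ((RthreeT F (a + b + 1) x H).mulVec v)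
              = (RthreeT F (a + b + 1) x H).mulVec
                  ((EstarRel F (a + b + 1) x H i j).mulVec v)) :=
  Rthree_iso_general F a b x H hH hxH
end
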